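/- Under the error bound property with constants M = f* − d(x^{0,0}) and κ > 0, assume additionally that f* − d(x^{0,0}) ≤ L_d R_d²/2 and that the restart length of Algorithm (R-DFG) satisfies K_c + 1 ≥ 2 e κ. Then the last primal iterate v^p = u(x^{0,p}) converges globally linearly: for all p ≥ 0, ‖v^p − u*‖ ≤ e^{−p} √(L_d R_d²/σ_f), dist_K(G v^p + g) ≤ L_d R_d e^{−p}, and |f(v^p) − f*| ≤ L_d R_d (2 R_d + ‖x^{0,0}‖) e^{−p}. -/

import Mathlib

/-!
The dual function `d` is concave and `‖G‖² / σ_f`-smooth (by the quadratic growth of `L(·, x)`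
around `u(x)`), so FISTA applies to `max_{K*} d`. The Beck–Teboulle Lyapunov function gives,
for one run of length `K_c` started at `x⁰`, `θ_{K_c}² (f* - d(x^{K_c})) ≤ L_d / 2 · dist(x⁰, X*)²`.
The error bound and the gradient-mapping estimate `L_d / 2 ‖∇⁺d(x)‖² ≤ f* - d(x)` turn the right
side into `κ² (f* - d(x⁰))`, and `θ_{K_c} ≥ (K_c + 1) / 2 ≥ e κ`, so every restart divides the dual
gap by `e²`. Strong convexity converts the dual gap at `x^{0,p}` into `σ_f / 2 ‖v^p - u*‖²`, which
yields the three primal bounds with rate `e^{-p}`.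
-/

open scoped RealInnerProductSpace

section ProjectedGradient

variable {E : Type*} [NormedAddCommGroup E]

def IsMetricProjection (C : Set E) (P : E → E) : Prop :=
  ∀ z, P z ∈ C ∧ ∀ w ∈ C, ‖z - P z‖ ≤ ‖z - w‖

theorem IsMetricProjection.mem {C : Set E} {P : E → E} (hP : IsMetricProjection C P) (z : E) :
    P z ∈ C :=
  (hP z).1

variable [InnerProductSpace ℝ E]

theorem IsMetricProjection.inner_sub_le_zero {C : Set E} {P : E → E}
    (hP : IsMetricProjection C P) (hC : Convex ℝ C) (z : E) {w : E} (hw : w ∈ C) :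
    ⟪z - P z, w - P z⟫ ≤ 0 := by
  obtain ⟨hPz, hmin⟩ := hP z
  have : Nonempty C := ⟨⟨P z, hPz⟩⟩
  refine (norm_eq_iInf_iff_real_inner_le_zero hC hPz).mp (le_antisymm ?_ ?_) w hw
  · exact le_ciInf fun w' => hmin w' w'.2
  · exact ciInf_le (f := fun w : C => ‖z - (w : E)‖)
      ⟨0, Set.forall_mem_range.2 fun _ => norm_nonneg _⟩ ⟨P z, hPz⟩

structure IsSmoothConcave (φ : E → ℝ) (φ' : E → E) (L : ℝ) : Prop where
  le_add_inner : ∀ a b, φ b ≤ φ a + ⟪φ' a, b - a⟫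
  add_inner_sub_le : ∀ a b, φ a + ⟪φ' a, b - a⟫ - L / 2 * ‖b - a‖ ^ 2 ≤ φ b

noncomputable def projGradStep (P φ' : E → E) (L : ℝ) (y : E) : E :=
  P (y + (1 / L) • φ' y)

variable {C : Set E} {P : E → E} {φ : E → ℝ} {φ' : E → E} {L : ℝ}

theorem IsMetricProjection.projGradStep_mem (hP : IsMetricProjection C P) (φ' : E → E) (L : ℝ)
    (y : E) : projGradStep P φ' L y ∈ C :=
  hP.mem _

theorem IsSmoothConcave.le_projGradStep (hφ : IsSmoothConcave φ φ' L) (hC : Convex ℝ C)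
    (hP : IsMetricProjection C P) (hL : 0 < L) (y : E) {z : E} (hz : z ∈ C) :
    φ z + L / 2 * ‖projGradStep P φ' L y - y‖ ^ 2
        + L * ⟪y - z, projGradStep P φ' L y - y⟫ ≤ φ (projGradStep P φ' L y) := by
  set T := projGradStep P φ' L y
  have hvi := hP.inner_sub_le_zero hC (y + (1 / L) • φ' y) hz
  rw [add_sub_right_comm, inner_add_left, real_inner_smul_left] at hvi
  have hvi' : L * ⟪y - T, z - T⟫ + ⟪φ' y, z - T⟫ ≤ 0 := by
    have := mul_le_mul_of_nonneg_left hvi hL.le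
    rwa [mul_add, ← mul_assoc, mul_one_div_cancel hL.ne', one_mul, mul_zero] at this
  have e1 : ⟪φ' y, z - T⟫ = ⟪φ' y, z - y⟫ - ⟪φ' y, T - y⟫ := by
    rw [← inner_sub_right, sub_sub_sub_cancel_right]
  have e2 : ⟪y - T, z - T⟫ = ‖T - y‖ ^ 2 + ⟪y - z, T - y⟫ := by
    rw [← real_inner_self_eq_norm_sq, ← inner_add_left, real_inner_comm, ← inner_neg_neg,
      neg_sub, neg_sub]
    congr 1; abel
  nlinarith [hφ.le_add_inner y z, hφ.add_inner_sub_le y T]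

theorem IsSmoothConcave.sq_norm_projGradStep_sub_le (hφ : IsSmoothConcave φ φ' L)
    (hC : Convex ℝ C) (hP : IsMetricProjection C P) (hL : 0 < L) {φmax : ℝ}
    (hmax : ∀ z ∈ C, φ z ≤ φmax) {z : E} (hz : z ∈ C) :
    L / 2 * ‖projGradStep P φ' L z - z‖ ^ 2 ≤ φmax - φ z := by
  have := hφ.le_projGradStep hC hP hL z hz
  rw [sub_self, inner_zero_left, mul_zero, add_zero] at this
  linarith [hmax _ (hP.projGradStep_mem φ' L z)]

theorem IsSmoothConcave.norm_projGradStep_sub_le (hφ : IsSmoothConcave φ φ' L)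
    (hC : Convex ℝ C) (hP : IsMetricProjection C P) (hL : 0 < L)
    {w : E} (hw : w ∈ C) (hmax : ∀ z ∈ C, φ z ≤ φ w) (x : E) :
    ‖projGradStep P φ' L x - x‖ ≤ 2 * ‖x - w‖ := by
  have h := hφ.le_projGradStep hC hP hL x hw
  have hT := hmax _ (hP.projGradStep_mem φ' L x)
  have hcs := real_inner_le_norm (w - x) (projGradStep P φ' L x - x)
  rw [← neg_sub x w, inner_neg_left, norm_neg] at hcs
  by_contra! hlt
  have ht : 0 < ‖projGradStep P φ' L x - x‖ := lt_of_le_of_lt (by positivity) hlt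
  nlinarith [mul_lt_mul_of_pos_left hlt (mul_pos hL ht)]

end ProjectedGradient

section FistaStepsizes

variable {θ : ℕ → ℝ}

structure IsFistaStepsize (θ : ℕ → ℝ) : Prop where
  one : θ 1 = 1
  one_le : ∀ k, 1 ≤ k → 1 ≤ θ k
  sq_sub_self : ∀ k, 1 ≤ k → θ (k + 1) ^ 2 - θ (k + 1) = θ k ^ 2

theorem le_theta_of_fista_rec (hθ1 : θ 1 = 1)
    (hθrec : ∀ k, 1 ≤ k → θ (k + 1) = (1 + Real.sqrt (1 + 4 * θ k ^ 2)) / 2) {k : ℕ}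
    (hk : 1 ≤ k) : ((k : ℝ) + 1) / 2 ≤ θ k := by
  induction k, hk using Nat.le_induction with
  | base => rw [hθ1]; norm_num
  | succ k hk ih =>
    have h2θ : 2 * θ k ≤ Real.sqrt (1 + 4 * θ k ^ 2) :=
      calc 2 * θ k ≤ |2 * θ k| := le_abs_self _
        _ = Real.sqrt ((2 * θ k) ^ 2) := (Real.sqrt_sq_eq_abs _).symm
        _ ≤ Real.sqrt (1 + 4 * θ k ^ 2) := Real.sqrt_le_sqrt (by nlinarith)
    rw [hθrec k hk]
    push_cast
    linarith

theorem IsFistaStepsize.of_rec (hθ1 : θ 1 = 1)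
    (hθrec : ∀ k, 1 ≤ k → θ (k + 1) = (1 + Real.sqrt (1 + 4 * θ k ^ 2)) / 2) :
    IsFistaStepsize θ where
  one := hθ1
  one_le k hk := by
    have hk' : (1 : ℝ) ≤ k := by exact_mod_cast hk
    linarith [le_theta_of_fista_rec hθ1 hθrec hk]
  sq_sub_self k hk := by
    have hs : Real.sqrt (1 + 4 * θ k ^ 2) ^ 2 = 1 + 4 * θ k ^ 2 := Real.sq_sqrt (by positivity)
    rw [hθrec k hk]
    linear_combination hs / 4

end FistaStepsizes

section Fista

variable {E : Type*} [NormedAddCommGroup E] [InnerProductSpace ℝ E]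
  {C : Set E} {P : E → E} {φ : E → ℝ} {φ' : E → E} {L : ℝ} {θ : ℕ → ℝ} {x y : ℕ → E}

structure IsFistaSeq (T : E → E) (θ : ℕ → ℝ) (x y : ℕ → E) : Prop where
  y_one : y 1 = x 0
  x_eq : ∀ k, 1 ≤ k → x k = T (y k)
  y_succ : ∀ k, 1 ≤ k → y (k + 1) = x k + ((θ k - 1) / θ (k + 1)) • (x k - x (k - 1))

/-- The Beck–Teboulle Lyapunov function of FISTA. -/
noncomputable def fistaPotential (φ : E → ℝ) (L : ℝ) (θ : ℕ → ℝ) (x : ℕ → E) (w : E) (k : ℕ) : ℝ :=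
  θ k ^ 2 * (φ w - φ (x k)) + L / 2 * ‖θ k • x k - (θ k - 1) • x (k - 1) - w‖ ^ 2

namespace IsFistaSeq

theorem mem (hx : IsFistaSeq (projGradStep P φ' L) θ x y) (hP : IsMetricProjection C P) {k : ℕ}
    (hk : 1 ≤ k) : x k ∈ C := by
  rw [hx.x_eq k hk]
  exact hP.projGradStep_mem φ' L _

theorem fistaPotential_one_le (hx : IsFistaSeq (projGradStep P φ' L) θ x y)
    (hφ : IsSmoothConcave φ φ' L) (hC : Convex ℝ C) (hP : IsMetricProjection C P) (hL : 0 < L)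
    (hθ : IsFistaStepsize θ) {w : E} (hw : w ∈ C) :
    fistaPotential φ L θ x w 1 ≤ L / 2 * ‖x 0 - w‖ ^ 2 := by
  have key := hφ.le_projGradStep hC hP hL (y 1) hw
  rw [← hx.x_eq 1 le_rfl, hx.y_one] at key
  have hnorm : ‖x 1 - w‖ ^ 2 = ‖x 1 - x 0‖ ^ 2 + 2 * ⟪x 1 - x 0, x 0 - w⟫ + ‖x 0 - w‖ ^ 2 := by
    rw [← norm_add_sq_real, sub_add_sub_cancel]
  simp only [fistaPotential, hθ.one, one_pow, one_smul, sub_self, zero_smul, sub_zero, one_mul,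
    Nat.sub_self]
  rw [real_inner_comm] at key
  nlinarith

theorem fistaPotential_succ_le (hx : IsFistaSeq (projGradStep P φ' L) θ x y)
    (hφ : IsSmoothConcave φ φ' L) (hC : Convex ℝ C) (hP : IsMetricProjection C P) (hL : 0 < L)
    (hθ : IsFistaStepsize θ) {w : E} (hw : w ∈ C) {k : ℕ} (hk : 1 ≤ k) :
    fistaPotential φ L θ x w (k + 1) ≤ fistaPotential φ L θ x w k := by
  have ha : 1 ≤ θ (k + 1) := hθ.one_le (k + 1) (by omega)
  have hyk := hx.y_succ k hk
  have hxk := hφ.le_projGradStep hC hP hL (y (k + 1)) (hx.mem hP hk)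
  have hxw := hφ.le_projGradStep hC hP hL (y (k + 1)) hw
  rw [← hx.x_eq (k + 1) (by omega)] at hxk hxw
  have hu : (θ (k + 1) - 1) • (y (k + 1) - x k) + (y (k + 1) - w)
      = θ k • x k - (θ k - 1) • x (k - 1) - w := by
    rw [hyk]
    match_scalars <;> field_simp <;> ring
  have hnext : θ (k + 1) • x (k + 1) - (θ (k + 1) - 1) • x (k + 1 - 1) - w
      = (θ k • x k - (θ k - 1) • x (k - 1) - w) + θ (k + 1) • (x (k + 1) - y (k + 1)) := by
    rw [Nat.add_sub_cancel, hyk]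
    match_scalars <;> field_simp <;> ring
  unfold fistaPotential
  rw [hnext, ← hθ.sq_sub_self k hk]
  generalize θ k • x k - (θ k - 1) • x (k - 1) - w = u at hu
  generalize x (k + 1) - y (k + 1) = t at hxk hxw
  have hinner : (θ (k + 1) - 1) * ⟪y (k + 1) - x k, t⟫ + ⟪y (k + 1) - w, t⟫ = ⟪u, t⟫ := by
    rw [← hu, inner_add_left, real_inner_smul_left]
  rw [norm_add_sq_real, real_inner_smul_right, norm_smul, Real.norm_eq_abs, mul_pow, sq_abs]
  -- the ascent inequalities at `y (k + 1)` against `x k` and `w`, weighted by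
  -- `θ (k + 1) (θ (k + 1) - 1)` and `θ (k + 1)`
  linarith [mul_le_mul_of_nonneg_left hxk (by nlinarith : 0 ≤ θ (k + 1) * (θ (k + 1) - 1)),
    mul_le_mul_of_nonneg_left hxw (by linarith : 0 ≤ θ (k + 1)),
    congrArg (L * θ (k + 1) * ·) hinner]

theorem fistaPotential_le (hx : IsFistaSeq (projGradStep P φ' L) θ x y)
    (hφ : IsSmoothConcave φ φ' L) (hC : Convex ℝ C) (hP : IsMetricProjection C P) (hL : 0 < L)
    (hθ : IsFistaStepsize θ)
    {w : E} (hw : w ∈ C) {k : ℕ} (hk : 1 ≤ k) :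
    fistaPotential φ L θ x w k ≤ L / 2 * ‖x 0 - w‖ ^ 2 := by
  induction k, hk using Nat.le_induction with
  | base => exact hx.fistaPotential_one_le hφ hC hP hL hθ hw
  | succ k hk ih => exact (hx.fistaPotential_succ_le hφ hC hP hL hθ hw hk).trans ih

theorem norm_sub_le (hx : IsFistaSeq (projGradStep P φ' L) θ x y)
    (hφ : IsSmoothConcave φ φ' L) (hC : Convex ℝ C) (hP : IsMetricProjection C P) (hL : 0 < L)
    (hθ : IsFistaStepsize θ)
    {w : E} (hw : w ∈ C) (hmax : ∀ z ∈ C, φ z ≤ φ w) (k : ℕ) :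
    ‖x k - w‖ ≤ ‖x 0 - w‖ := by
  induction k with
  | zero => exact le_rfl
  | succ k ih =>
    have hθk : 1 ≤ θ (k + 1) := hθ.one_le (k + 1) (by omega)
    have hu : ‖θ (k + 1) • x (k + 1) - (θ (k + 1) - 1) • x k - w‖ ≤ ‖x 0 - w‖ := by
      have hpot := hx.fistaPotential_le hφ hC hP hL hθ hw (k := k + 1) (by omega)
      have hgap : 0 ≤ θ (k + 1) ^ 2 * (φ w - φ (x (k + 1))) :=
        mul_nonneg (sq_nonneg _) (sub_nonneg.2 (hmax _ (hx.mem hP (by omega))))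
      rw [fistaPotential, Nat.add_sub_cancel] at hpot
      exact pow_le_pow_iff_left₀ (norm_nonneg _) (norm_nonneg _) two_ne_zero |>.1 <| by nlinarith
    have hcomb : x (k + 1) - w
        = (1 / θ (k + 1)) • (θ (k + 1) • x (k + 1) - (θ (k + 1) - 1) • x k - w)
          + ((θ (k + 1) - 1) / θ (k + 1)) • (x k - w) := by
      match_scalars <;> field_simp <;> ring
    calc ‖x (k + 1) - w‖
        ≤ 1 / θ (k + 1) * ‖x 0 - w‖ + (θ (k + 1) - 1) / θ (k + 1) * ‖x 0 - w‖ := by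
          rw [hcomb]
          refine (norm_add_le _ _).trans ?_
          rw [norm_smul, norm_smul, Real.norm_of_nonneg (by positivity),
            Real.norm_of_nonneg (div_nonneg (by linarith) (by positivity))]
          gcongr
      _ = ‖x 0 - w‖ := by field_simp; ring

theorem gap_le_of_errorBound (hx : IsFistaSeq (projGradStep P φ' L) θ x y)
    (hφ : IsSmoothConcave φ φ' L) (hC : Convex ℝ C) (hP : IsMetricProjection C P) (hL : 0 < L)
    (hθ : IsFistaStepsize θ)
    {w : E} (hw : w ∈ C) (hmax : ∀ z ∈ C, φ z ≤ φ w) (hx0 : x 0 ∈ C) {κ : ℝ}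
    (hEB : ‖x 0 - w‖ ≤ κ * ‖projGradStep P φ' L (x 0) - x 0‖) {k : ℕ} (hk : 1 ≤ k) :
    θ k ^ 2 * (φ w - φ (x k)) ≤ κ ^ 2 * (φ w - φ (x 0)) := by
  have hpot := hx.fistaPotential_le hφ hC hP hL hθ hw hk
  have hgrad := hφ.sq_norm_projGradStep_sub_le hC hP hL hmax hx0
  have hsq : ‖x 0 - w‖ ^ 2 ≤ κ ^ 2 * ‖projGradStep P φ' L (x 0) - x 0‖ ^ 2 := by
    rw [← mul_pow]
    exact pow_le_pow_left₀ (norm_nonneg _) hEB 2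
  rw [fistaPotential] at hpot
  nlinarith [mul_le_mul_of_nonneg_left hgrad (sq_nonneg κ)]

end IsFistaSeq

end Fista

section Restart

variable {E : Type*} [NormedAddCommGroup E] [InnerProductSpace ℝ E]
  {C : Set E} {P : E → E} {φ : E → ℝ} {φ' : E → E} {L : ℝ} {θ : ℕ → ℝ} {Kc : ℕ}
  {X Y : ℕ → ℕ → E}

theorem IsSmoothConcave.half_le_of_errorBound (hφ : IsSmoothConcave φ φ' L) (hC : Convex ℝ C)
    (hP : IsMetricProjection C P) (hL : 0 < L) {w : E} (hw : w ∈ C)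
    (hmax : ∀ z ∈ C, φ z ≤ φ w) {x : E} (hx : φ x < φ w) {κ : ℝ}
    (hEB : ‖x - w‖ ≤ κ * ‖projGradStep P φ' L x - x‖) : 1 / 2 ≤ κ := by
  have hT := hφ.norm_projGradStep_sub_le hC hP hL hw hmax x
  have hxw : 0 < ‖x - w‖ := norm_pos_iff.2 <| sub_ne_zero.2 <| by rintro rfl; exact hx.false
  by_contra! hκ
  rcases le_or_gt 0 κ with hκ0 | hκ0
  · nlinarith [mul_le_mul_of_nonneg_left hT hκ0]
  · nlinarith [norm_nonneg (projGradStep P φ' L x - x)]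

theorem restart_norm_sub_le (hφ : IsSmoothConcave φ φ' L) (hC : Convex ℝ C)
    (hP : IsMetricProjection C P) (hL : 0 < L) (hθ : IsFistaStepsize θ)
    (hX : ∀ j, IsFistaSeq (projGradStep P φ' L) θ (X j) (Y j))
    (hrestart : ∀ j, X (j + 1) 0 = X j Kc) {w : E} (hw : w ∈ C) (hmax : ∀ z ∈ C, φ z ≤ φ w)
    (j : ℕ) : ‖X j 0 - w‖ ≤ ‖X 0 0 - w‖ := by
  induction j with
  | zero => exact le_rfl
  | succ j ih =>
    rw [hrestart]
    exact ((hX j).norm_sub_le hφ hC hP hL hθ hw hmax Kc).trans ih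

theorem restart_mem (hP : IsMetricProjection C P)
    (hX : ∀ j, IsFistaSeq (projGradStep P φ' L) θ (X j) (Y j))
    (hrestart : ∀ j, X (j + 1) 0 = X j Kc) (hKc : 1 ≤ Kc) (hX00 : X 0 0 ∈ C) :
    ∀ j, X j 0 ∈ C
  | 0 => hX00
  | j + 1 => hrestart j ▸ (hX j).mem hP hKc

theorem restart_gap_le (hφ : IsSmoothConcave φ φ' L) (hC : Convex ℝ C)
    (hP : IsMetricProjection C P) (hL : 0 < L) (hθ : IsFistaStepsize θ)
    (hX : ∀ j, IsFistaSeq (projGradStep P φ' L) θ (X j) (Y j))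
    (hrestart : ∀ j, X (j + 1) 0 = X j Kc) (hKc : 1 ≤ Kc) (hX00 : X 0 0 ∈ C) {φmax : ℝ}
    (hmax : ∀ z ∈ C, φ z ≤ φmax) {Q : E → E} (hQ : ∀ z, Q z ∈ C ∧ φ (Q z) = φmax) {κ : ℝ}
    (hκ : 0 ≤ κ)
    (hEB : ∀ z ∈ C, φmax - φ z ≤ φmax - φ (X 0 0) →
      ‖z - Q z‖ ≤ κ * ‖projGradStep P φ' L z - z‖)
    (hθKc : Real.exp 1 * κ ≤ θ Kc) (j : ℕ) :
    φmax - φ (X j 0) ≤ Real.exp (-j) ^ 2 * (φmax - φ (X 0 0)) := by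
  have hmem := restart_mem hP hX hrestart hKc hX00
  have hθpos : 0 < θ Kc := by linarith [hθ.one_le Kc hKc]
  have hκθ : κ ≤ Real.exp (-1) * θ Kc := by
    rw [Real.exp_neg, ← div_eq_inv_mul, le_div_iff₀ (Real.exp_pos 1)]
    linarith
  induction j with
  | zero => simp
  | succ j ih =>
    have hgap0 : 0 ≤ φmax - φ (X j 0) := sub_nonneg.2 (hmax _ (hmem j))
    have hexp : Real.exp (-j) ^ 2 ≤ 1 :=
      pow_le_one₀ (Real.exp_pos _).le (Real.exp_le_one_iff.2 (by simp))
    have hEBj := hEB _ (hmem j) (by nlinarith [sub_nonneg.2 (hmax _ hX00)])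
    obtain ⟨hQC, hQφ⟩ := hQ (X j 0)
    have hrun := (hX j).gap_le_of_errorBound hφ hC hP hL hθ hQC
      (hQφ ▸ hmax) (hmem j) hEBj hKc
    rw [hQφ, ← hrestart] at hrun
    have hcontract : θ Kc ^ 2 * (φmax - φ (X (j + 1) 0))
        ≤ θ Kc ^ 2 * (Real.exp (-1) ^ 2 * (φmax - φ (X j 0))) :=
      calc θ Kc ^ 2 * (φmax - φ (X (j + 1) 0)) ≤ κ ^ 2 * (φmax - φ (X j 0)) := hrun
        _ ≤ (Real.exp (-1) * θ Kc) ^ 2 * (φmax - φ (X j 0)) := by gcongr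
        _ = θ Kc ^ 2 * (Real.exp (-1) ^ 2 * (φmax - φ (X j 0))) := by ring
    have hsplit : Real.exp (-((j + 1 : ℕ) : ℝ)) = Real.exp (-1) * Real.exp (-j) := by
      rw [← Real.exp_add]; push_cast; ring_nf
    calc φmax - φ (X (j + 1) 0) ≤ Real.exp (-1) ^ 2 * (φmax - φ (X j 0)) :=
          le_of_mul_le_mul_left hcontract (by positivity)
      _ ≤ Real.exp (-1) ^ 2 * (Real.exp (-j) ^ 2 * (φmax - φ (X 0 0))) := by gcongr
      _ = Real.exp (-((j + 1 : ℕ) : ℝ)) ^ 2 * (φmax - φ (X 0 0)) := by rw [hsplit]; ring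

end Restart

theorem StrongConvexOn.add_sq_norm_sub_le_of_isMinOn {E : Type*} [NormedAddCommGroup E]
    [NormedSpace ℝ E] {s : Set E} {m : ℝ} {f : E → ℝ} (hf : StrongConvexOn s m f) {a x : E}
    (ha : a ∈ s) (hmin : IsMinOn f s a) (hx : x ∈ s) :
    f a + m / 2 * ‖x - a‖ ^ 2 ≤ f x := by
  rw [norm_sub_rev]
  -- compare `a` with the points `(1 - t) • a + t • x` of the segment and let `t → 0⁺`
  have hlim : Filter.Tendsto (fun t : ℝ => (1 - t) * (m / 2 * ‖a - x‖ ^ 2))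
      (nhdsWithin 0 (Set.Ioi 0)) (nhds (m / 2 * ‖a - x‖ ^ 2)) := by
    have := ((continuous_const.sub continuous_id).mul continuous_const).tendsto
      (0 : ℝ) (f := fun t : ℝ => (1 - t) * (m / 2 * ‖a - x‖ ^ 2))
    simpa using this.mono_left nhdsWithin_le_nhds
  have hseg : ∀ t ∈ Set.Ioo (0 : ℝ) 1, (1 - t) * (m / 2 * ‖a - x‖ ^ 2) ≤ f x - f a := by
    rintro t ⟨ht0, ht1⟩
    have hconv : f ((1 - t) • a + t • x) ≤ (1 - t) * f a + t * f x
        - (1 - t) * t * (m / 2 * ‖a - x‖ ^ 2) := hf.2 ha hx (by linarith) ht0.le (by ring)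
    have hle : f a ≤ f ((1 - t) • a + t • x) :=
      hmin (hf.1 ha hx (by linarith : 0 ≤ 1 - t) ht0.le (by ring))
    nlinarith
  have := le_of_tendsto hlim (Filter.eventually_of_mem (Ioo_mem_nhdsGT one_pos) hseg)
  linarith

section LagrangianDuality

variable {E F : Type*} [NormedAddCommGroup E] [InnerProductSpace ℝ E]
  [NormedAddCommGroup F] [InnerProductSpace ℝ F]
  {f : E → ℝ} {G : E →L[ℝ] F} {g : F} {U : Set E} {σ : ℝ} {uu : F → E}

theorem convex_setOf_forall_inner_nonneg (K : Set F) :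
    Convex ℝ {x : F | ∀ v ∈ K, 0 ≤ ⟪x, v⟫} := by
  intro x hx y hy a b ha hb _ v hv
  rw [inner_add_left, real_inner_smul_left, real_inner_smul_left]
  exact add_nonneg (mul_nonneg ha (hx v hv)) (mul_nonneg hb (hy v hv))

def lagrangian (f : E → ℝ) (G : E →L[ℝ] F) (g : F) (u : E) (x : F) : ℝ :=
  f u + ⟪x, -(G u) - g⟫

def IsLagrangianMinimizer (f : E → ℝ) (G : E →L[ℝ] F) (g : F) (U : Set E) (uu : F → E) : Prop :=
  ∀ x, uu x ∈ U ∧ ∀ u ∈ U, lagrangian f G g (uu x) x ≤ lagrangian f G g u x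

theorem lagrangian_eq_sub_inner (u : E) (x : F) :
    lagrangian f G g u x = f u - ⟪x, G u + g⟫ := by
  rw [lagrangian, ← neg_add', inner_neg_right, sub_eq_add_neg]

theorem lagrangian_eq_add_inner (u : E) (x y : F) :
    lagrangian f G g u y = lagrangian f G g u x + ⟪y - x, -(G u) - g⟫ := by
  rw [lagrangian, lagrangian, inner_sub_left]
  ring

theorem StrongConvexOn.lagrangian (hf : StrongConvexOn U σ f) (x : F) :
    StrongConvexOn U σ fun u => lagrangian f G g u x := by
  have hlin : ConvexOn ℝ U fun u => ⟪x, -(G u) - g⟫ := by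
    refine ⟨hf.1, fun u _ v _ a b _ _ hab => le_of_eq ?_⟩
    simp only [map_add, map_smul, inner_sub_right, inner_neg_right, inner_add_right,
      real_inner_smul_right, smul_eq_mul]
    linear_combination ⟪x, g⟫ * hab
  have h := hf.add hlin.uniformConvexOn_zero
  rw [add_zero] at h
  exact h

theorem lagrangian_add_sq_norm_sub_le
    (huu : IsLagrangianMinimizer f G g U uu)
    (hf : StrongConvexOn U σ f) (x : F) {u : E} (hu : u ∈ U) :
    lagrangian f G g (uu x) x + σ / 2 * ‖u - uu x‖ ^ 2 ≤ lagrangian f G g u x :=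
  (hf.lagrangian x).add_sq_norm_sub_le_of_isMinOn (huu x).1 (huu x).2 hu

theorem dual_le_sub_inner
    (huu : IsLagrangianMinimizer f G g U uu)
    (x : F) {u : E} (hu : u ∈ U) :
    lagrangian f G g (uu x) x ≤ f u - ⟪x, G u + g⟫ :=
  lagrangian_eq_sub_inner (f := f) u x ▸ (huu x).2 u hu

theorem dual_le_of_inner_nonneg
    (huu : IsLagrangianMinimizer f G g U uu)
    {u : E} (hu : u ∈ U) {x : F} (hx : 0 ≤ ⟪x, G u + g⟫) : lagrangian f G g (uu x) x ≤ f u := by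
  linarith [dual_le_sub_inner huu x hu]

theorem isSmoothConcave_dual
    (huu : IsLagrangianMinimizer f G g U uu)
    (hσ : 0 < σ) (hf : StrongConvexOn U σ f) :
    IsSmoothConcave (fun x => lagrangian f G g (uu x) x) (fun x => -(G (uu x)) - g)
      (‖G‖ ^ 2 / σ) where
  le_add_inner a b := by
    rw [real_inner_comm, ← lagrangian_eq_add_inner]
    exact (huu b).2 _ (huu a).1
  add_inner_sub_le a b := by
    have hgrowth := lagrangian_add_sq_norm_sub_le huu hf a (huu b).1
    have hshift : ⟪b - a, -(G (uu b)) - g⟫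
        = ⟪b - a, -(G (uu a)) - g⟫ + ⟪b - a, G (uu a - uu b)⟫ := by
      rw [← inner_add_right, map_sub]; congr 1; abel
    have hcs : -(‖b - a‖ * (‖G‖ * ‖uu b - uu a‖)) ≤ ⟪b - a, G (uu a - uu b)⟫ := by
      rw [← neg_sub (uu b), map_neg, inner_neg_right, neg_le_neg_iff]
      exact (real_inner_le_norm _ _).trans (by gcongr; exact G.le_opNorm _)
    have hamgm : -(‖G‖ ^ 2 / σ / 2 * ‖b - a‖ ^ 2)
        ≤ σ / 2 * ‖uu b - uu a‖ ^ 2 - ‖b - a‖ * (‖G‖ * ‖uu b - uu a‖) := by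
      have hsq : 0 ≤ (σ * ‖uu b - uu a‖ - ‖G‖ * ‖b - a‖) ^ 2 / (2 * σ) := by positivity
      have hexpand : (σ * ‖uu b - uu a‖ - ‖G‖ * ‖b - a‖) ^ 2 / (2 * σ) = σ / 2 * ‖uu b - uu a‖ ^ 2
          - ‖b - a‖ * (‖G‖ * ‖uu b - uu a‖) + ‖G‖ ^ 2 / σ / 2 * ‖b - a‖ ^ 2 := by
        field_simp; ring
      linarith
    rw [lagrangian_eq_add_inner (uu b) a b, real_inner_comm]
    linarith

theorem sq_norm_sub_le_sub_dual
    (huu : IsLagrangianMinimizer f G g U uu)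
    (hf : StrongConvexOn U σ f) {u : E} (hu : u ∈ U) {x : F}
    (hx : 0 ≤ ⟪x, G u + g⟫) :
    σ / 2 * ‖uu x - u‖ ^ 2 ≤ f u - lagrangian f G g (uu x) x := by
  have := lagrangian_add_sq_norm_sub_le huu hf x hu
  rw [lagrangian_eq_sub_inner u, norm_sub_rev] at this
  linarith

theorem abs_sub_le_mul_norm
    (huu : IsLagrangianMinimizer f G g U uu)
    {u : E} (hu : u ∈ U) {x xstar : F} {B : ℝ} (hx : ‖x‖ ≤ B)
    (hxstar : ‖xstar‖ ≤ B) (hfeas : 0 ≤ ⟪xstar, G u + g⟫)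
    (hopt : f u ≤ lagrangian f G g (uu xstar) xstar) :
    |f (uu x) - f u| ≤ B * ‖G (uu x) - G u‖ := by
  have hsplit : ∀ y : F, ⟪y, G (uu x) + g⟫ = ⟪y, G (uu x) - G u⟫ + ⟪y, G u + g⟫ := fun y => by
    rw [← inner_add_right]; congr 1; abel
  have hupper := dual_le_sub_inner huu x hu
  have hlower := hopt.trans ((huu xstar).2 _ (huu x).1)
  rw [lagrangian_eq_sub_inner] at hupper hlower
  rw [hsplit] at hlower
  have h1 := real_inner_le_norm x (G (uu x) - G u)
  have h2 := real_inner_le_norm (-xstar) (G (uu x) - G u)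
  rw [inner_neg_left, norm_neg] at h2
  have h3 := mul_le_mul_of_nonneg_right hx (norm_nonneg (G (uu x) - G u))
  have h4 := mul_le_mul_of_nonneg_right hxstar (norm_nonneg (G (uu x) - G u))
  rw [abs_le]
  constructor <;> linarith [hsplit x]

theorem norm_sub_le_of_dual_gap_le
    (huu : IsLagrangianMinimizer f G g U uu)
    (hσ : 0 < σ) (hf : StrongConvexOn U σ f) {u : E} (hu : u ∈ U) {x : F}
    (hx : 0 ≤ ⟪x, G u + g⟫) {c R : ℝ} (hc : 0 ≤ c)
    (hgap : f u - lagrangian f G g (uu x) x ≤ c ^ 2 * (‖G‖ ^ 2 / σ * R ^ 2 / 2)) :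
    ‖uu x - u‖ ≤ c * Real.sqrt (‖G‖ ^ 2 / σ * R ^ 2 / σ) := by
  have hsq := (sq_norm_sub_le_sub_dual huu hf hu hx).trans hgap
  rw [← abs_norm, ← Real.sqrt_sq hc, ← Real.sqrt_mul (sq_nonneg c)]
  refine Real.abs_le_sqrt ?_
  rw [mul_div_assoc', le_div_iff₀ hσ]
  linarith

theorem norm_map_sub_le_of_dual_gap_le
    (huu : IsLagrangianMinimizer f G g U uu)
    (hσ : 0 < σ) (hf : StrongConvexOn U σ f) {u : E} (hu : u ∈ U) {x : F}
    (hx : 0 ≤ ⟪x, G u + g⟫) {c R : ℝ} (hc : 0 ≤ c) (hR : 0 ≤ R)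
    (hgap : f u - lagrangian f G g (uu x) x ≤ c ^ 2 * (‖G‖ ^ 2 / σ * R ^ 2 / 2)) :
    ‖G (uu x) - G u‖ ≤ ‖G‖ ^ 2 / σ * R * c := by
  have hsqrt : Real.sqrt (‖G‖ ^ 2 / σ * R ^ 2 / σ) = ‖G‖ * R / σ := by
    rw [Real.sqrt_eq_iff_eq_sq (by positivity) (by positivity)]
    ring
  calc ‖G (uu x) - G u‖ ≤ ‖G‖ * ‖uu x - u‖ := by rw [← map_sub]; exact G.le_opNorm _
    _ ≤ ‖G‖ * (c * (‖G‖ * R / σ)) := by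
        rw [← hsqrt]; gcongr; exact norm_sub_le_of_dual_gap_le huu hσ hf hu hx hc hgap
    _ = ‖G‖ ^ 2 / σ * R * c := by ring

theorem primal_bounds_of_dual_gap_le
    (huu : IsLagrangianMinimizer f G g U uu)
    (hσ : 0 < σ) (hf : StrongConvexOn U σ f) {K : Set F} {u : E} (hu : u ∈ U) (hGu : G u + g ∈ K)
    {x xstar x₀ : F} (hx : ∀ v ∈ K, 0 ≤ ⟪x, v⟫) (hxstar : ∀ v ∈ K, 0 ≤ ⟪xstar, v⟫)
    (hopt : f u ≤ lagrangian f G g (uu xstar) xstar) {c R : ℝ} (hc : 0 ≤ c)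
    (hR : R = ‖x₀ - xstar‖) (hxR : ‖x - xstar‖ ≤ R)
    (hgap : f u - lagrangian f G g (uu x) x ≤ c ^ 2 * (‖G‖ ^ 2 / σ * R ^ 2 / 2)) :
    ‖uu x - u‖ ≤ c * Real.sqrt (‖G‖ ^ 2 / σ * R ^ 2 / σ) ∧
      Metric.infDist (G (uu x) + g) K ≤ ‖G‖ ^ 2 / σ * R * c ∧
      |f (uu x) - f u| ≤ ‖G‖ ^ 2 / σ * R * (2 * R + ‖x₀‖) * c := by
  have hR0 : 0 ≤ R := hR ▸ norm_nonneg _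
  have hGv := norm_map_sub_le_of_dual_gap_le huu hσ hf hu (hx _ hGu) hc hR0 hgap
  refine ⟨norm_sub_le_of_dual_gap_le huu hσ hf hu (hx _ hGu) hc hgap, ?_, ?_⟩
  · calc Metric.infDist (G (uu x) + g) K ≤ dist (G (uu x) + g) (G u + g) :=
          Metric.infDist_le_dist_of_mem hGu
      _ = ‖G (uu x) - G u‖ := by rw [dist_add_right, dist_eq_norm]
      _ ≤ _ := hGv
  · have hxstar_le : ‖xstar‖ ≤ ‖x₀‖ + R := hR ▸ norm_le_norm_add_norm_sub _ _
    have hx_le : ‖x‖ ≤ ‖x₀‖ + 2 * R := by linarith [norm_le_norm_add_norm_sub' x xstar]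
    calc |f (uu x) - f u| ≤ (‖x₀‖ + 2 * R) * ‖G (uu x) - G u‖ :=
          abs_sub_le_mul_norm huu hu hx_le (by linarith) (hxstar _ hGu) hopt
      _ ≤ (‖x₀‖ + 2 * R) * (‖G‖ ^ 2 / σ * R * c) := by gcongr
      _ = _ := by ring

end LagrangianDuality

theorem stmt_17_general {n p : ℕ}
    (f : EuclideanSpace ℝ (Fin n) → ℝ) (σf : ℝ) (hσf : 0 < σf)
    (hfsc : StrongConvexOn Set.univ σf f)
    (U : Set (EuclideanSpace ℝ (Fin n))) (hUcv : Convex ℝ U)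
    (G : EuclideanSpace ℝ (Fin n) →L[ℝ] EuclideanSpace ℝ (Fin p)) (hG : G ≠ 0) (g : EuclideanSpace ℝ (Fin p))
    (K : Set (EuclideanSpace ℝ (Fin p)))
    (Kstar : Set (EuclideanSpace ℝ (Fin p)))
    (hKstar : Kstar = {x : EuclideanSpace ℝ (Fin p) | ∀ v ∈ K, 0 ≤ ⟪x, v⟫})
    (Lag : EuclideanSpace ℝ (Fin n) → EuclideanSpace ℝ (Fin p) → ℝ)
    (hLag : ∀ u x, Lag u x = f u + ⟪x, -(G u) - g⟫)
    (uu : EuclideanSpace ℝ (Fin p) → EuclideanSpace ℝ (Fin n))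
    (huu : ∀ x : EuclideanSpace ℝ (Fin p), uu x ∈ U ∧ ∀ u ∈ U, Lag (uu x) x ≤ Lag u x)
    (d : EuclideanSpace ℝ (Fin p) → ℝ) (hd : ∀ x, d x = Lag (uu x) x)
    (ustar : EuclideanSpace ℝ (Fin n))
    (hustar : ustar ∈ U ∧ G ustar + g ∈ K ∧ ∀ u ∈ U, G u + g ∈ K → f ustar ≤ f u)
    (fstar : ℝ) (hfstar : fstar = f ustar)
    (Xstar : Set (EuclideanSpace ℝ (Fin p))) (hXstar : Xstar = {x ∈ Kstar | d x = fstar})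
    (Ld : ℝ) (hLd : Ld = ‖G‖ ^ 2 / σf)
    (projKs : EuclideanSpace ℝ (Fin p) → EuclideanSpace ℝ (Fin p))
    (hprojKs : ∀ z : EuclideanSpace ℝ (Fin p), projKs z ∈ Kstar ∧ ∀ w ∈ Kstar, ‖z - projKs z‖ ≤ ‖z - w‖)
    (projX : EuclideanSpace ℝ (Fin p) → EuclideanSpace ℝ (Fin p))
    (hprojX : ∀ z : EuclideanSpace ℝ (Fin p), projX z ∈ Xstar ∧ ∀ w ∈ Xstar, ‖z - projX z‖ ≤ ‖z - w‖)
    (θ : ℕ → ℝ) (hθ1 : θ 1 = 1)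
    (hθrec : ∀ k, 1 ≤ k → θ (k + 1) = (1 + Real.sqrt (1 + 4 * θ k ^ 2)) / 2)
    (Kc : ℕ) (X Y : ℕ → ℕ → EuclideanSpace ℝ (Fin p)) (hX00 : X 0 0 ∈ Kstar)
    (hYinit : ∀ j, Y j 1 = X j 0)
    (hXrec : ∀ j k, 1 ≤ k →
      X j k = projKs (Y j k + (1 / Ld) • (-(G (uu (Y j k))) - g)))
    (hYrec : ∀ j k, 1 ≤ k →
      Y j (k + 1) = X j k + ((θ k - 1) / θ (k + 1)) • (X j k - X j (k - 1)))
    (hrestart : ∀ j, X (j + 1) 0 = X j Kc)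
    (xstar : EuclideanSpace ℝ (Fin p)) (hxstar : xstar ∈ Xstar)
    (Rd : ℝ) (hRd : Rd = ‖X 0 0 - xstar‖)
    (κ : ℝ) (hMpos : 0 < fstar - d (X 0 0))
    (hEB : ∀ z ∈ Kstar, fstar - d z ≤ fstar - d (X 0 0) →
      ‖z - projX z‖ ≤ κ * ‖projKs (z + (1 / Ld) • (-(G (uu z)) - g)) - z‖)
    (hinit : fstar - d (X 0 0) ≤ Ld * Rd ^ 2 / 2)
    (hKc : 2 * Real.exp 1 * κ ≤ (Kc : ℝ) + 1) :
    ∀ q : ℕ,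
      ‖uu (X q 0) - ustar‖ ≤ Real.exp (-(q : ℝ)) * Real.sqrt (Ld * Rd ^ 2 / σf) ∧
      Metric.infDist (G (uu (X q 0)) + g) K ≤ Ld * Rd * Real.exp (-(q : ℝ)) ∧
      |f (uu (X q 0)) - fstar| ≤
        Ld * Rd * (2 * Rd + ‖X 0 0‖) * Real.exp (-(q : ℝ)) := by
  obtain rfl : Lag = lagrangian f G g := funext₂ hLag
  obtain rfl : d = fun x => lagrangian f G g (uu x) x := funext hd
  subst hKstar hXstar hfstar hLd
  beta_reduce at hprojX hxstar hMpos hinit hEB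
  have hfU : StrongConvexOn U σf f :=
    ⟨hUcv, fun _ _ _ _ => hfsc.2 (Set.mem_univ _) (Set.mem_univ _)⟩
  have hφ := isSmoothConcave_dual huu hσf hfU
  have hKs := convex_setOf_forall_inner_nonneg K
  have hL : 0 < ‖G‖ ^ 2 / σf := by have := norm_pos_iff.2 hG; positivity
  have hmax : ∀ z ∈ {x | ∀ v ∈ K, 0 ≤ ⟪x, v⟫}, lagrangian f G g (uu z) z ≤ f ustar :=
    fun z hz => dual_le_of_inner_nonneg huu hustar.1 (hz _ hustar.2.1)
  have hθ := IsFistaStepsize.of_rec hθ1 hθrec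
  have hX : ∀ j, IsFistaSeq (projGradStep projKs (fun z => -(G (uu z)) - g) (‖G‖ ^ 2 / σf)) θ
      (X j) (Y j) := fun j => ⟨hYinit j, hXrec j, hYrec j⟩
  have hκ : 1 / 2 ≤ κ := hφ.half_le_of_errorBound hKs hprojKs hL (hprojX _).1.1
    (fun z hz => (hmax z hz).trans_eq (hprojX _).1.2.symm)
    (by linarith [(hprojX (X 0 0)).1.2]) (hEB _ hX00 le_rfl)
  have he : 2 < Real.exp 1 := by linarith [Real.add_one_lt_exp one_ne_zero]
  have hKc1 : 1 ≤ Kc := by exact_mod_cast (by nlinarith : (1 : ℝ) ≤ Kc)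
  have hθKc : Real.exp 1 * κ ≤ θ Kc := by linarith [le_theta_of_fista_rec hθ1 hθrec hKc1]
  intro q
  have hgap := restart_gap_le hφ hKs hprojKs hL hθ hX hrestart hKc1 hX00 hmax
    (fun z => (hprojX z).1) (by linarith) hEB hθKc q
  have hdist := restart_norm_sub_le hφ hKs hprojKs hL hθ hX hrestart hxstar.1
    (fun z hz => (hmax z hz).trans_eq hxstar.2.symm) q
  exact primal_bounds_of_dual_gap_le huu hσf hfU hustar.1 hustar.2.1
    (restart_mem hprojKs hX hrestart hKc1 hX00 q) hxstar.1 hxstar.2.ge (Real.exp_pos _).le hRd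
    (hRd ▸ hdist) (hgap.trans (by gcongr))

theorem stmt_17 {n p : ℕ}
    (f : EuclideanSpace ℝ (Fin n) → ℝ) (σf : ℝ) (hσf : 0 < σf)
    (hfc : Continuous f) (hfsc : StrongConvexOn Set.univ σf f)
    (U : Set (EuclideanSpace ℝ (Fin n))) (hUne : U.Nonempty) (hUcl : IsClosed U) (hUcv : Convex ℝ U)
    (G : EuclideanSpace ℝ (Fin n) →L[ℝ] EuclideanSpace ℝ (Fin p)) (hG : G ≠ 0) (g : EuclideanSpace ℝ (Fin p))
    (K : Set (EuclideanSpace ℝ (Fin p))) (hKne : K.Nonempty) (hKcl : IsClosed K) (hKcv : Convex ℝ K)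
    (hKcone : ∀ c : ℝ, 0 ≤ c → ∀ v ∈ K, c • v ∈ K)
    (Kstar : Set (EuclideanSpace ℝ (Fin p)))
    (hKstar : Kstar = {x : EuclideanSpace ℝ (Fin p) | ∀ v ∈ K, 0 ≤ ⟪x, v⟫})
    (Lag : EuclideanSpace ℝ (Fin n) → EuclideanSpace ℝ (Fin p) → ℝ)
    (hLag : ∀ u x, Lag u x = f u + ⟪x, -(G u) - g⟫)
    (uu : EuclideanSpace ℝ (Fin p) → EuclideanSpace ℝ (Fin n))
    (huu : ∀ x : EuclideanSpace ℝ (Fin p), uu x ∈ U ∧ ∀ u ∈ U, Lag (uu x) x ≤ Lag u x)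
    (d : EuclideanSpace ℝ (Fin p) → ℝ) (hd : ∀ x, d x = Lag (uu x) x)
    (ustar : EuclideanSpace ℝ (Fin n))
    (hustar : ustar ∈ U ∧ G ustar + g ∈ K ∧ ∀ u ∈ U, G u + g ∈ K → f ustar ≤ f u)
    (fstar : ℝ) (hfstar : fstar = f ustar)
    (Xstar : Set (EuclideanSpace ℝ (Fin p))) (hXstar : Xstar = {x ∈ Kstar | d x = fstar})
    (hXne : Xstar.Nonempty)
    (Ld : ℝ) (hLd : Ld = ‖G‖ ^ 2 / σf)
    (projKs : EuclideanSpace ℝ (Fin p) → EuclideanSpace ℝ (Fin p))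
    (hprojKs : ∀ z : EuclideanSpace ℝ (Fin p), projKs z ∈ Kstar ∧ ∀ w ∈ Kstar, ‖z - projKs z‖ ≤ ‖z - w‖)
    (projX : EuclideanSpace ℝ (Fin p) → EuclideanSpace ℝ (Fin p))
    (hprojX : ∀ z : EuclideanSpace ℝ (Fin p), projX z ∈ Xstar ∧ ∀ w ∈ Xstar, ‖z - projX z‖ ≤ ‖z - w‖)
    (θ : ℕ → ℝ) (hθ0 : θ 0 = 0) (hθ1 : θ 1 = 1)
    (hθrec : ∀ k, 1 ≤ k → θ (k + 1) = (1 + Real.sqrt (1 + 4 * θ k ^ 2)) / 2)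
    (Kc : ℕ) (X Y : ℕ → ℕ → EuclideanSpace ℝ (Fin p)) (hX00 : X 0 0 ∈ Kstar)
    (hYinit : ∀ j, Y j 1 = X j 0)
    (hXrec : ∀ j k, 1 ≤ k →
      X j k = projKs (Y j k + (1 / Ld) • (-(G (uu (Y j k))) - g)))
    (hYrec : ∀ j k, 1 ≤ k →
      Y j (k + 1) = X j k + ((θ k - 1) / θ (k + 1)) • (X j k - X j (k - 1)))
    (hrestart : ∀ j, X (j + 1) 0 = X j Kc)
    (xstar : EuclideanSpace ℝ (Fin p)) (hxstar : xstar ∈ Xstar)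
    (hxstarmin : ∀ z ∈ Xstar, ‖X 0 0 - xstar‖ ≤ ‖X 0 0 - z‖)
    (Rd : ℝ) (hRd : Rd = ‖X 0 0 - xstar‖)
    (κ : ℝ) (hκ : 0 < κ) (hMpos : 0 < fstar - d (X 0 0))
    (hEB : ∀ z ∈ Kstar, fstar - d z ≤ fstar - d (X 0 0) →
      ‖z - projX z‖ ≤ κ * ‖projKs (z + (1 / Ld) • (-(G (uu z)) - g)) - z‖)
    (hinit : fstar - d (X 0 0) ≤ Ld * Rd ^ 2 / 2)
    (hKc : 2 * Real.exp 1 * κ ≤ (Kc : ℝ) + 1) :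
    ∀ q : ℕ,
      ‖uu (X q 0) - ustar‖ ≤ Real.exp (-(q : ℝ)) * Real.sqrt (Ld * Rd ^ 2 / σf) ∧
      Metric.infDist (G (uu (X q 0)) + g) K ≤ Ld * Rd * Real.exp (-(q : ℝ)) ∧
      |f (uu (X q 0)) - fstar| ≤
        Ld * Rd * (2 * Rd + ‖X 0 0‖) * Real.exp (-(q : ℝ)) :=
  stmt_17_general f σf hσf hfsc U hUcv G hG g K Kstar hKstar Lag hLag uu huu d hd ustar hustar fstar
    hfstar Xstar hXstar Ld hLd projKs hprojKs projX hprojX θ hθ1 hθrec Kc X Y hX00 hYinit hXrec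
    hYrec hrestart xstar hxstar Rd hRd κ hMpos hEB hinit hKc
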